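/- arXiv:1108.4904 — 4 statements merged into one kernel-verified Lean document; each statement's English description precedes it below -/
import Mathlib

section
/- Let k ≥ 3 and n = 2k+1. In the triangle group Δ(2,3,n) = ⟨α, u, v | α^n = u³ = v² = αuv = 1⟩, set a = α² and b = u²α²u. Then vα²v = u²α²u, α = a^{k+1}, v = a^k b^k a^k, and u = a⁻¹ b^k a^k; consequently the subgroup of Δ(2,3,n) generated by the three elements a = α², b = u²α²u, and c = uα²u² is the whole group Δ(2,3,n). -/
/-- Relators of the triangle group `Δ(2,3,n)` in the presentation
`⟨α, u, v | α^n = u³ = v² = αuv = 1⟩` (generators `0 ↦ α`, `1 ↦ u`, `2 ↦ v`). -/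
def tri23Rels (n : ℕ) : Set (FreeGroup (Fin 3)) :=
  {(FreeGroup.of 0) ^ n, (FreeGroup.of 1) ^ 3, (FreeGroup.of 2) ^ 2,
   FreeGroup.of 0 * FreeGroup.of 1 * FreeGroup.of 2}

/-- The triangle group `Δ(2,3,n) = ⟨α, u, v | α^n = u³ = v² = αuv = 1⟩`. -/
abbrev Tri23 (n : ℕ) := PresentedGroup (tri23Rels n)

/-!
Write `a = α²`. As `α^(2k+1) = 1`, `a^k = α⁻¹` and `a^(k+1) = α`. The relations give
`v = (αu)⁻¹ = v⁻¹`, so `v = αu = u⁻¹α⁻¹` with `u⁻¹ = u²`. Hence `vα²v = u⁻¹α²u = b`, so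
`b^k = vα⁻¹v`, and `α⁻¹vα⁻¹vα⁻¹ = u²α⁻¹ = v`, i.e. `v = a^k b^k a^k`. Finally `u = α⁻¹v`, so the
generators `α`, `u`, `v` all lie in `⟨a, b⟩`.
-/

section TriangleRelations

variable {G : Type*} [Group G] {α u v : G}

theorem eq_mul_of_mul_mul_eq_one_of_sq_eq_one (hv : v ^ 2 = 1) (h : α * u * v = 1) :
    v = α * u := by
  rw [← inv_eq_of_mul_eq_one_left h, inv_eq_of_mul_eq_one_left (pow_two v ▸ hv)]

theorem eq_inv_mul_inv_of_mul_mul_eq_one (h : α * u * v = 1) : v = u⁻¹ * α⁻¹ := by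
  rw [← mul_inv_rev]
  exact eq_inv_of_mul_eq_one_right h

theorem mul_sq_mul_eq_of_mul_mul_eq_one (hu : u ^ 3 = 1) (hv : v ^ 2 = 1)
    (h : α * u * v = 1) : v * α ^ 2 * v = u ^ 2 * α ^ 2 * u := by
  have hu_inv : u⁻¹ = u ^ 2 := inv_eq_of_mul_eq_one_right (by rw [← pow_succ', hu])
  calc v * α ^ 2 * v = u⁻¹ * α⁻¹ * α ^ 2 * (α * u) := by
        nth_rewrite 1 [eq_inv_mul_inv_of_mul_mul_eq_one h]
        rw [← eq_mul_of_mul_mul_eq_one_of_sq_eq_one hv h]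
    _ = u ^ 2 * α ^ 2 * u := by rw [← hu_inv]; group

theorem eq_inv_mul_conj_inv_mul_inv (hu : u ^ 3 = 1) (hv : v ^ 2 = 1) (h : α * u * v = 1) :
    v = α⁻¹ * (v * α⁻¹ * v) * α⁻¹ := by
  have hu_inv : u⁻¹ = u ^ 2 := inv_eq_of_mul_eq_one_right (by rw [← pow_succ', hu])
  calc v = u⁻¹ * α⁻¹ := eq_inv_mul_inv_of_mul_mul_eq_one h
    _ = α⁻¹ * (α * u * α⁻¹ * (α * u)) * α⁻¹ := by rw [hu_inv, pow_two]; group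
    _ = α⁻¹ * (v * α⁻¹ * v) * α⁻¹ := by rw [← eq_mul_of_mul_mul_eq_one_of_sq_eq_one hv h]

theorem sq_pow_eq_inv_of_pow_eq_one {k : ℕ} (hα : α ^ (2 * k + 1) = 1) : (α ^ 2) ^ k = α⁻¹ :=
  eq_inv_of_mul_eq_one_left (by rw [← pow_mul, ← pow_succ, hα])

theorem sq_pow_succ_of_pow_eq_one {k : ℕ} (hα : α ^ (2 * k + 1) = 1) : (α ^ 2) ^ (k + 1) = α := by
  rw [← pow_mul, mul_add, mul_one, pow_add, pow_two α, ← mul_assoc, ← pow_succ, hα, one_mul]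

theorem conj_pow_of_sq_eq_one (hv : v ^ 2 = 1) (x : G) (k : ℕ) :
    (v * x * v) ^ k = v * x ^ k * v := by
  have hv_inv : v⁻¹ = v := inv_eq_of_mul_eq_one_left (pow_two v ▸ hv)
  simpa only [hv_inv] using conj_pow (a := v) (b := x) (i := k)

theorem eq_sq_pow_mul_conj_sq_pow_mul_sq_pow {k : ℕ} (hα : α ^ (2 * k + 1) = 1)
    (hu : u ^ 3 = 1) (hv : v ^ 2 = 1) (h : α * u * v = 1) :
    v = (α ^ 2) ^ k * (v * α ^ 2 * v) ^ k * (α ^ 2) ^ k := by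
  rw [conj_pow_of_sq_eq_one hv, sq_pow_eq_inv_of_pow_eq_one hα]
  exact eq_inv_mul_conj_inv_mul_inv hu hv h

theorem eq_sq_inv_mul_conj_sq_pow_mul_sq_pow {k : ℕ} (hα : α ^ (2 * k + 1) = 1)
    (hu : u ^ 3 = 1) (hv : v ^ 2 = 1) (h : α * u * v = 1) :
    u = (α ^ 2)⁻¹ * (v * α ^ 2 * v) ^ k * (α ^ 2) ^ k := by
  calc u = α⁻¹ * v := by rw [eq_mul_of_mul_mul_eq_one_of_sq_eq_one hv h, inv_mul_cancel_left]
    _ = α⁻¹ * ((α ^ 2) ^ k * (v * α ^ 2 * v) ^ k * (α ^ 2) ^ k) := by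
      rw [← eq_sq_pow_mul_conj_sq_pow_mul_sq_pow hα hu hv h]
    _ = (α ^ 2)⁻¹ * (v * α ^ 2 * v) ^ k * (α ^ 2) ^ k := by
      rw [sq_pow_eq_inv_of_pow_eq_one hα]; group

end TriangleRelations

namespace Tri23

variable {n : ℕ}

theorem of_zero_pow : (PresentedGroup.of 0 : Tri23 n) ^ n = 1 :=
  (map_pow _ _ _).symm.trans (PresentedGroup.one_of_mem (by simp [tri23Rels]))

theorem of_one_pow : (PresentedGroup.of 1 : Tri23 n) ^ 3 = 1 :=
  (map_pow _ _ _).symm.trans (PresentedGroup.one_of_mem (by simp [tri23Rels]))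

theorem of_two_pow : (PresentedGroup.of 2 : Tri23 n) ^ 2 = 1 :=
  (map_pow _ _ _).symm.trans (PresentedGroup.one_of_mem (by simp [tri23Rels]))

theorem of_mul_of_mul_of :
    (PresentedGroup.of 0 * PresentedGroup.of 1 * PresentedGroup.of 2 : Tri23 n) = 1 :=
  PresentedGroup.one_of_mem (x := FreeGroup.of 0 * FreeGroup.of 1 * FreeGroup.of 2)
    (by simp [tri23Rels])

theorem eq_top_of_of_zero_mem_of_of_two_mem {H : Subgroup (Tri23 n)}
    (h0 : PresentedGroup.of 0 ∈ H) (h2 : PresentedGroup.of 2 ∈ H) : H = ⊤ := by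
  have h1 : PresentedGroup.of 1 ∈ H := by
    rw [← inv_mul_cancel_left (PresentedGroup.of 0) (PresentedGroup.of 1),
      eq_inv_of_mul_eq_one_left of_mul_of_mul_of]
    exact mul_mem (inv_mem h0) (inv_mem h2)
  refine (Subgroup.eq_top_iff' H).2 (PresentedGroup.generated_by _ H fun i => ?_)
  fin_cases i
  exacts [h0, h1, h2]

end Tri23

theorem stmt3_general (k : ℕ) (a b c : Tri23 (2 * k + 1))
    (ha : a = (PresentedGroup.of 0) ^ 2)
    (hb : b = (PresentedGroup.of 1) ^ 2 * (PresentedGroup.of 0) ^ 2 * PresentedGroup.of 1) :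
    PresentedGroup.of 2 * (PresentedGroup.of 0) ^ 2 * PresentedGroup.of 2 = b ∧
    (PresentedGroup.of 0 : Tri23 (2 * k + 1)) = a ^ (k + 1) ∧
    (PresentedGroup.of 2 : Tri23 (2 * k + 1)) = a ^ k * b ^ k * a ^ k ∧
    (PresentedGroup.of 1 : Tri23 (2 * k + 1)) = a⁻¹ * b ^ k * a ^ k ∧
    Subgroup.closure {a, b, c} = ⊤ := by
  set α : Tri23 (2 * k + 1) := PresentedGroup.of 0
  set u : Tri23 (2 * k + 1) := PresentedGroup.of 1
  set v : Tri23 (2 * k + 1) := PresentedGroup.of 2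
  have hα : α ^ (2 * k + 1) = 1 := Tri23.of_zero_pow
  have hu : u ^ 3 = 1 := Tri23.of_one_pow
  have hv : v ^ 2 = 1 := Tri23.of_two_pow
  have hαuv : α * u * v = 1 := Tri23.of_mul_of_mul_of
  have hb_conj : v * α ^ 2 * v = b := (mul_sq_mul_eq_of_mul_mul_eq_one hu hv hαuv).trans hb.symm
  subst ha hb_conj
  have hα_eq : α = (α ^ 2) ^ (k + 1) := (sq_pow_succ_of_pow_eq_one hα).symm
  have hv_eq := eq_sq_pow_mul_conj_sq_pow_mul_sq_pow hα hu hv hαuv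
  refine ⟨rfl, hα_eq, hv_eq, eq_sq_inv_mul_conj_sq_pow_mul_sq_pow hα hu hv hαuv, ?_⟩
  set H := Subgroup.closure {α ^ 2, v * α ^ 2 * v, c}
  have ha_mem : α ^ 2 ∈ H := Subgroup.subset_closure (by simp)
  have hb_mem : v * α ^ 2 * v ∈ H := Subgroup.subset_closure (by simp)
  have hα_mem : α ∈ H := hα_eq ▸ pow_mem ha_mem _
  have hv_mem : v ∈ H :=
    hv_eq ▸ mul_mem (mul_mem (pow_mem ha_mem _) (pow_mem hb_mem _)) (pow_mem ha_mem _)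
  exact Tri23.eq_top_of_of_zero_mem_of_of_two_mem hα_mem hv_mem

/-- For `k ≥ 3` and `n = 2k+1`, in `Δ(2,3,n) = ⟨α, u, v | α^n = u³ = v² = αuv = 1⟩`,
setting `a = α²` and `b = u²α²u` (and `c = uα²u²`), one has `vα²v = u²α²u`, `α = a^(k+1)`,
`v = a^k b^k a^k` and `u = a⁻¹ b^k a^k`; consequently the subgroup generated by `a`, `b`, `c`
is all of `Δ(2,3,n)`. -/
theorem stmt3 (k : ℕ) (hk : 3 ≤ k) (a b c : Tri23 (2 * k + 1))
    (ha : a = (PresentedGroup.of 0) ^ 2)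
    (hb : b = (PresentedGroup.of 1) ^ 2 * (PresentedGroup.of 0) ^ 2 * PresentedGroup.of 1)
    (hc : c = PresentedGroup.of 1 * (PresentedGroup.of 0) ^ 2 * (PresentedGroup.of 1) ^ 2) :
    PresentedGroup.of 2 * (PresentedGroup.of 0) ^ 2 * PresentedGroup.of 2 = b ∧
    (PresentedGroup.of 0 : Tri23 (2 * k + 1)) = a ^ (k + 1) ∧
    (PresentedGroup.of 2 : Tri23 (2 * k + 1)) = a ^ k * b ^ k * a ^ k ∧
    (PresentedGroup.of 1 : Tri23 (2 * k + 1)) = a⁻¹ * b ^ k * a ^ k ∧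
    Subgroup.closure {a, b, c} = ⊤ :=
  stmt3_general k a b c ha hb
end

section
/- Let q be a primitive n-th root of unity with n ∉ {1,2,3,4,5,6} (equivalently, −q is not a primitive root of unity of order belonging to {1,2,3,4,6,10}). Then the group Γ(q) is infinite. -/
open Matrix

/-- The matrix `A(q)` (image of `g₁²` under the reduced Burau representation `β₋q`),
as an element of `GL(2,ℂ)` (junk value `1` if `q = 0`). -/
noncomputable def AGL (q : ℂ) : GL (Fin 2) ℂ :=
  if h : q = 0 then 1 else
    Matrix.GeneralLinearGroup.mkOfDetNeZero !![q ^ 2, 1 + q; 0, 1]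
      (by rw [Matrix.det_fin_two_of]; simpa using pow_ne_zero 2 h)

/-- The matrix `B(q)` (image of `g₂²` under the reduced Burau representation `β₋q`),
as an element of `GL(2,ℂ)` (junk value `1` if `q = 0`). -/
noncomputable def BGL (q : ℂ) : GL (Fin 2) ℂ :=
  if h : q = 0 then 1 else
    Matrix.GeneralLinearGroup.mkOfDetNeZero !![1, 0; -q - q ^ 2, q ^ 2]
      (by rw [Matrix.det_fin_two_of]; simpa using pow_ne_zero 2 h)

/-- `PGL(2,ℂ)`: the quotient of `GL(2,ℂ)` by its center. -/
abbrev PGL2 : Type := GL (Fin 2) ℂ ⧸ Subgroup.center (GL (Fin 2) ℂ)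

/-- The canonical projection `GL(2,ℂ) → PGL(2,ℂ)`. -/
noncomputable def pgl : GL (Fin 2) ℂ →* PGL2 := QuotientGroup.mk' _

/-- The class `[A(q)] ∈ PGL(2,ℂ)`. -/
noncomputable def Apr (q : ℂ) : PGL2 := pgl (AGL q)

/-- The class `[B(q)] ∈ PGL(2,ℂ)`. -/
noncomputable def Bpr (q : ℂ) : PGL2 := pgl (BGL q)

/-- The group `Γ(q) = Γ₋q ⊆ PGL(2,ℂ)` generated by `[A(q)]` and `[B(q)]`. -/
noncomputable def Gamma (q : ℂ) : Subgroup PGL2 := Subgroup.closure {Apr q, Bpr q}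

/-- Relators of the triangle group `Δ(l,m,n) = ⟨x,y | x^l = y^m = (xy)^n = 1⟩`. -/
def triangleRels (l m n : ℕ) : Set (FreeGroup (Fin 2)) :=
  {(FreeGroup.of 0) ^ l, (FreeGroup.of 1) ^ m, (FreeGroup.of 0 * FreeGroup.of 1) ^ n}

/-- The triangle group `Δ(l,m,n)`. -/
abbrev Triangle (l m n : ℕ) := PresentedGroup (triangleRels l m n)

/-! If `[A][B]⁻¹` had finite order `e` in `PGL(2,ℂ)`, then the `e`-th powers of the two
eigenvalues of `A B⁻¹` would agree. Since `A B⁻¹` has determinant `1` and trace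
`s = (q + q⁻¹)² + (q + q⁻¹)`, an eigenvalue `μ` would then be a root of unity with
`μ + μ⁻¹ = s`. A Galois automorphism sending `q` to `exp (2πi/n)` turns this into
`ω + ω⁻¹ = c² + c` with `ω` a root of unity and `c = 2 cos (2π/n)`; for `n ≥ 7` we have
`c > 1`, so the right side exceeds `2 ≥ |ω + ω⁻¹|`. -/

theorem IsPrimitiveRoot.exists_algEquiv_apply_eq {L : Type*} [Field L] [CharZero L]
    [Normal ℚ L] {x y : L} {n : ℕ} (hx : IsPrimitiveRoot x n) (hy : IsPrimitiveRoot y n)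
    (hn : 0 < n) : ∃ σ : Gal(L/ℚ), σ x = y := by
  have : IsConjRoot ℚ y x := by
    rw [isConjRoot_def, ← Polynomial.cyclotomic_eq_minpoly_rat hx hn,
      ← Polynomial.cyclotomic_eq_minpoly_rat hy hn]
  exact this.exists_algEquiv

theorem mem_algebraicClosure_of_pow_eq_one {F E : Type*} [Field F] [Field E] [Algebra F E]
    {x : E} {k : ℕ} (hk : k ≠ 0) (hx : x ^ k = 1) : x ∈ algebraicClosure F E :=
  mem_algebraicClosure_iff.mpr
    (IsIntegral.of_pow (Nat.pos_of_ne_zero hk) (hx ▸ isIntegral_one)).isAlgebraic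

theorem Complex.norm_add_inv_le_two_of_pow_eq_one {ω : ℂ} {e : ℕ} (hω : ω ^ e = 1)
    (he : e ≠ 0) : ‖ω + ω⁻¹‖ ≤ 2 := by
  have h1 := Complex.norm_eq_one_of_pow_eq_one hω he
  calc ‖ω + ω⁻¹‖ ≤ ‖ω‖ + ‖ω⁻¹‖ := norm_add_le _ _
    _ = 2 := by rw [norm_inv, h1]; norm_num

theorem Complex.exp_mul_I_add_inv (θ : ℝ) :
    Complex.exp (θ * Complex.I) + (Complex.exp (θ * Complex.I))⁻¹ = (2 * Real.cos θ : ℝ) := by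
  rw [← Complex.exp_neg, ← neg_mul, ← Complex.two_cos]
  push_cast
  rfl

theorem one_lt_two_mul_cos_two_pi_div {n : ℕ} (hn : 6 < n) :
    1 < 2 * Real.cos (2 * Real.pi / n) := by
  have hpos : (0 : ℝ) < n := by positivity
  have hθ : 2 * Real.pi / n < Real.pi / 3 := by
    rw [div_lt_div_iff₀ hpos (by norm_num)]
    have : (6 : ℝ) < n := by exact_mod_cast hn
    nlinarith [Real.pi_pos]
  have := Real.cos_lt_cos_of_nonneg_of_le_pi (by positivity) (by linarith [Real.pi_pos]) hθ
  rw [Real.cos_pi_div_three] at this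
  linarith

theorem add_inv_ne_of_isPrimitiveRoot {n e : ℕ} (hn : 6 < n) (he : e ≠ 0) {q μ : ℂ}
    (hq : IsPrimitiveRoot q n) (hμ : μ ^ e = 1) :
    μ + μ⁻¹ ≠ (q + q⁻¹) ^ 2 + (q + q⁻¹) := by
  intro h
  have hn0 : n ≠ 0 := by omega
  set ζ := Complex.exp ((2 * Real.pi / n : ℝ) * Complex.I)
  have hζ : IsPrimitiveRoot ζ n := by
    convert Complex.isPrimitiveRoot_exp n hn0 using 2
    push_cast
    ring
  let L := algebraicClosure ℚ ℂ
  -- given explicitly: instance search does not identify the two `ℚ`-algebra structures on `L`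
  have : Normal ℚ L := @IsAlgClosure.normal _ _ _ _ _ (algebraicClosure.isAlgClosure ℚ ℂ)
  let q' : L := ⟨q, mem_algebraicClosure_of_pow_eq_one hn0 hq.pow_eq_one⟩
  let ζ' : L := ⟨ζ, mem_algebraicClosure_of_pow_eq_one hn0 hζ.pow_eq_one⟩
  let μ' : L := ⟨μ, mem_algebraicClosure_of_pow_eq_one he hμ⟩
  obtain ⟨σ, hσ⟩ := IsPrimitiveRoot.exists_algEquiv_apply_eq
    (IsPrimitiveRoot.coe_submonoidClass_iff.mp hq : IsPrimitiveRoot q' n)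
    (IsPrimitiveRoot.coe_submonoidClass_iff.mp hζ : IsPrimitiveRoot ζ' n)
    (Nat.pos_of_ne_zero hn0)
  let φ : L →ₐ[ℚ] ℂ := L.val.comp σ.toAlgHom
  have hφq : φ q' = ζ := congrArg Subtype.val hσ
  have hφμ : φ μ' ^ e = 1 := by
    rw [← map_pow, show μ' ^ e = 1 from Subtype.ext hμ, map_one]
  have hφ := congrArg φ (show μ' + μ'⁻¹ = (q' + q'⁻¹) ^ 2 + (q' + q'⁻¹) from Subtype.ext h)
  simp only [map_add, map_pow, map_inv₀] at hφ
  have hc := one_lt_two_mul_cos_two_pi_div hn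
  have hle := Complex.norm_add_inv_le_two_of_pow_eq_one hφμ he
  rw [hφ, hφq, Complex.exp_mul_I_add_inv, ← Complex.ofReal_pow, ← Complex.ofReal_add,
    Complex.norm_real, Real.norm_eq_abs, abs_of_pos (by nlinarith)] at hle
  nlinarith

theorem Matrix.pow_eq_of_det_scalar_sub_eq_zero {K n : Type*} [Field K] [Fintype n]
    [DecidableEq n] {M : Matrix n n K} {μ w : K} {e : ℕ}
    (hμ : (scalar n μ - M).det = 0) (hM : M ^ e = scalar n w) : μ ^ e = w := by
  obtain ⟨v, hv, hv_ker⟩ := Matrix.exists_mulVec_eq_zero_iff.mpr hμ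
  have hMv : M *ᵥ v = μ • v := by
    rw [Matrix.sub_mulVec, sub_eq_zero] at hv_ker
    simpa [Matrix.smul_mulVec] using hv_ker.symm
  have hpow : ∀ k : ℕ, (M ^ k) *ᵥ v = μ ^ k • v := by
    intro k
    induction k with
    | zero => simp
    | succ k ih =>
      rw [pow_succ, ← Matrix.mulVec_mulVec, hMv, Matrix.mulVec_smul, ih, smul_smul, pow_succ']
  have h := hpow e
  rw [hM, Matrix.scalar_apply, ← Matrix.smul_one_eq_diagonal, Matrix.smul_mulVec,
    Matrix.one_mulVec] at h
  exact (smul_left_injective K hv h).symm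

theorem exists_val_pow_eq_scalar_of_pgl_pow_eq_one {g : GL (Fin 2) ℂ} {e : ℕ}
    (h : pgl g ^ e = 1) : ∃ w : ℂ, (g : Matrix (Fin 2) (Fin 2) ℂ) ^ e = scalar (Fin 2) w := by
  rw [← map_pow, pgl, QuotientGroup.mk'_apply, QuotientGroup.eq_one_iff,
    Matrix.GeneralLinearGroup.mem_center_iff_val_mem_range_scalar] at h
  obtain ⟨w, hw⟩ := h
  exact ⟨w, by rw [hw, Units.val_pow_eq_pow_val]⟩

theorem val_AGL_mul_inv_BGL {q : ℂ} (hq : q ≠ 0) :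
    ((AGL q * (BGL q)⁻¹ : GL (Fin 2) ℂ) : Matrix (Fin 2) (Fin 2) ℂ) =
      !![q ^ 2 + (1 + q) ^ 2 / q, (1 + q) / q ^ 2; (1 + q) / q, 1 / q ^ 2] := by
  have hdet : (!![q ^ 2 + (1 + q) ^ 2 / q, (1 + q) / q ^ 2; (1 + q) / q, 1 / q ^ 2]).det = 1 := by
    rw [Matrix.det_fin_two_of]
    field_simp
    ring
  suffices h : Matrix.GeneralLinearGroup.mkOfDetNeZero _ (hdet ▸ one_ne_zero) * BGL q = AGL q by
    rw [← h, mul_inv_cancel_right]; rfl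
  ext i j
  rw [Units.val_mul, AGL, BGL, dif_neg hq, dif_neg hq]
  fin_cases i <;> fin_cases j <;>
    simp only [GeneralLinearGroup.val_mkOfDetNeZero, Matrix.mul_apply, Fin.sum_univ_two, of_apply,
      cons_val', cons_val_fin_one, cons_val_zero, cons_val_one, Fin.zero_eta, Fin.mk_one] <;>
    field_simp <;> ring

theorem det_scalar_sub_AGL_mul_inv_BGL {q : ℂ} (hq : q ≠ 0) (μ : ℂ) :
    (scalar (Fin 2) μ - ((AGL q * (BGL q)⁻¹ : GL (Fin 2) ℂ) : Matrix (Fin 2) (Fin 2) ℂ)).det =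
      μ ^ 2 - ((q + q⁻¹) ^ 2 + (q + q⁻¹)) * μ + 1 := by
  rw [val_AGL_mul_inv_BGL hq, Matrix.det_fin_two]
  simp only [scalar_apply, Matrix.sub_apply, diagonal_apply_eq, diagonal_apply_ne, of_apply,
    cons_val', cons_val_zero, cons_val_one, cons_val_fin_one, ne_eq, zero_ne_one, one_ne_zero,
    not_false_eq_true]
  field_simp
  ring

theorem IsAlgClosed.exists_add_inv_eq {K : Type*} [Field K] [IsAlgClosed K] (s : K) :
    ∃ μ : K, μ ≠ 0 ∧ μ + μ⁻¹ = s := by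
  open Polynomial in
  obtain ⟨μ, hμ⟩ := IsAlgClosed.exists_root (C 1 * X ^ 2 + C (-s) * X + C 1)
    (by rw [degree_quadratic one_ne_zero]; decide)
  simp only [IsRoot, eval_add, eval_mul, eval_C, eval_pow, eval_X] at hμ
  have hμ0 : μ ≠ 0 := by rintro rfl; simp at hμ
  refine ⟨μ, hμ0, ?_⟩
  field_simp
  linear_combination hμ

theorem not_isOfFinOrder_Apr_mul_inv_Bpr {n : ℕ} (hn : 6 < n) {q : ℂ}
    (hq : IsPrimitiveRoot q n) : ¬IsOfFinOrder (Apr q * (Bpr q)⁻¹) := by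
  rw [isOfFinOrder_iff_pow_eq_one]
  rintro ⟨e, he, hpow⟩
  have hq0 : q ≠ 0 := hq.ne_zero (by omega)
  rw [Apr, Bpr, ← map_inv, ← map_mul] at hpow
  obtain ⟨w, hw⟩ := exists_val_pow_eq_scalar_of_pgl_pow_eq_one hpow
  obtain ⟨μ, hμ0, hsum⟩ := IsAlgClosed.exists_add_inv_eq ((q + q⁻¹) ^ 2 + (q + q⁻¹))
  have hμw := Matrix.pow_eq_of_det_scalar_sub_eq_zero (μ := μ)
    (by rw [det_scalar_sub_AGL_mul_inv_BGL hq0, ← hsum]; field_simp; ring) hw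
  have hμinvw := Matrix.pow_eq_of_det_scalar_sub_eq_zero (μ := μ⁻¹)
    (by rw [det_scalar_sub_AGL_mul_inv_BGL hq0, ← hsum]; field_simp; ring) hw
  refine add_inv_ne_of_isPrimitiveRoot hn (e := 2 * e) (by omega) hq ?_ hsum
  calc μ ^ (2 * e) = μ ^ e * μ⁻¹ ^ e := by rw [hμinvw, ← hμw, ← pow_add, two_mul]
    _ = 1 := by rw [← mul_pow, mul_inv_cancel₀ hμ0, one_pow]

/-- If `q` is a primitive `n`-th root of unity with `n ∉ {1,2,3,4,5,6}`,
then the group `Γ(q)` is infinite. -/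
theorem stmt4 (n : ℕ) (hn0 : 0 < n) (hn : n ∉ ({1, 2, 3, 4, 5, 6} : Set ℕ))
    (q : ℂ) (hq : IsPrimitiveRoot q n) :
    Infinite ↥(Gamma q) := by
  have hn6 : 6 < n := by
    simp only [Set.mem_insert_iff, Set.mem_singleton_iff] at hn
    omega
  have hmem : Apr q * (Bpr q)⁻¹ ∈ Gamma q :=
    mul_mem (Subgroup.subset_closure (by simp)) (inv_mem (Subgroup.subset_closure (by simp)))
  rw [← not_finite_iff_infinite]
  intro hfin
  exact not_isOfFinOrder_Apr_mul_inv_Bpr hn6 hq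
    (Submonoid.isOfFinOrder_coe.mpr (isOfFinOrder_of_finite (⟨_, hmem⟩ : Gamma q)))
end

section
/- Let F be the free group on two generators a, b. For every integer r ≥ 1, the following identity holds in F: (ab)^r a^{−r} b^{−r} = (∏_{i=1}^{r−1} ⁅a^i, b^i⁆ · ⁅b^i, a^{i+1}⁆) · ⁅a^r, b^r⁆, where the product is taken in increasing order of i. -/
open scoped commutatorElement

/-
The identity holds in every group. Writing `Q r = (ab)^r (a^r b^r)⁻¹`, one checks directly that
`Q (r+1) = Q r · ⁅a^r, b^r⁆⁅b^r, a^(r+1)⁆`, so `Q r` telescopes into the product of these factors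
for `i < r`; the factor for `i = 0` is trivial, and `(ab)^r a^(-r) b^(-r) = Q r · ⁅a^r, b^r⁆`.
-/

section

variable {G : Type*} [Group G] (a b : G)

theorem mul_pow_succ_mul_inv_pow_mul_pow (r : ℕ) :
    (a * b) ^ (r + 1) * (a ^ (r + 1) * b ^ (r + 1))⁻¹ =
      (a * b) ^ r * (a ^ r * b ^ r)⁻¹ * (⁅a ^ r, b ^ r⁆ * ⁅b ^ r, a ^ (r + 1)⁆) := by
  simp only [commutatorElement_def, pow_succ]
  group

theorem mul_pow_mul_inv_pow_mul_pow_eq_prod (r : ℕ) :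
    (a * b) ^ r * (a ^ r * b ^ r)⁻¹ =
      ((List.range r).map fun i => ⁅a ^ i, b ^ i⁆ * ⁅b ^ i, a ^ (i + 1)⁆).prod := by
  induction r with
  | zero => simp
  | succ r ih =>
    rw [mul_pow_succ_mul_inv_pow_mul_pow, ih, List.range_succ, List.map_append, List.prod_append]
    simp

theorem mul_pow_mul_inv_pow_mul_inv_pow_eq_prod (r : ℕ) :
    (a * b) ^ r * (a ^ r)⁻¹ * (b ^ r)⁻¹ =
      (((List.range (r - 1)).map fun i =>
          ⁅a ^ (i + 1), b ^ (i + 1)⁆ * ⁅b ^ (i + 1), a ^ (i + 2)⁆).prod) * ⁅a ^ r, b ^ r⁆ := by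
  have hsplit : (a * b) ^ r * (a ^ r)⁻¹ * (b ^ r)⁻¹ =
      (a * b) ^ r * (a ^ r * b ^ r)⁻¹ * ⁅a ^ r, b ^ r⁆ := by
    rw [commutatorElement_def]
    group
  rw [hsplit, mul_pow_mul_inv_pow_mul_pow_eq_prod]
  cases r with
  | zero => simp
  | succ r => simp [List.range_succ_eq_map, Function.comp_def]

end

theorem stmt9_general (r : ℕ) (a b : FreeGroup (Fin 2)) :
    (a * b) ^ r * (a ^ r)⁻¹ * (b ^ r)⁻¹ =
      (((List.range (r - 1)).map fun i =>
          ⁅a ^ (i + 1), b ^ (i + 1)⁆ * ⁅b ^ (i + 1), a ^ (i + 2)⁆).prod) * ⁅a ^ r, b ^ r⁆ :=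
  mul_pow_mul_inv_pow_mul_inv_pow_eq_prod a b r

/-- In the free group `F` on two generators `a, b`, for every `r ≥ 1`,
`(ab)^r a^(−r) b^(−r) = (∏_{i=1}^{r−1} ⁅a^i, b^i⁆⁅b^i, a^(i+1)⁆) ⁅a^r, b^r⁆`,
the product being taken in increasing order of `i`. -/
theorem stmt9 (r : ℕ) (hr : 1 ≤ r) (a b : FreeGroup (Fin 2))
    (ha : a = FreeGroup.of 0) (hb : b = FreeGroup.of 1) :
    (a * b) ^ r * (a ^ r)⁻¹ * (b ^ r)⁻¹ =
      (((List.range (r - 1)).map fun i =>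
          ⁅a ^ (i + 1), b ^ (i + 1)⁆ * ⁅b ^ (i + 1), a ^ (i + 2)⁆).prod) * ⁅a ^ r, b ^ r⁆ :=
  stmt9_general r a b
end

section
/- Let F₃ be the free group on generators x₁, x₂, x₃ and let F₆ be the free group on generators y₁, z₁, y₂, z₂, y₃, z₃. Let η : F₃ → F₆ be the group homomorphism determined by η(x_i) = ⁅y_i, z_i⁆ for i = 1, 2, 3. Then for every k ≥ 1, η maps the k-th term of the lower central series of F₃ into the 2k-th term of the lower central series of F₆: η((F₃)_{(k)}) ⊆ (F₆)_{(2k)}. -/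
/-!
Each generator of `F₃` is sent to a commutator, so `η` maps `F₃` into `(F₆)_(2)`. By the three
subgroups lemma the lower central series satisfies `[G_(i), G_(j)] ≤ G_(i+j)`, hence a homomorphism
mapping `G` into `H_(c)` maps `G_(k) = [G_(k-1), G]` into `[H_(c(k-1)), H_(c)] ≤ H_(ck)`.
-/

open scoped commutatorElement

namespace Subgroup

variable {G : Type*} [Group G]

theorem commutator_commutator_le_of_rotate {H₁ H₂ H₃ N : Subgroup G} [N.Normal]
    (h1 : ⁅⁅H₂, H₃⁆, H₁⁆ ≤ N) (h2 : ⁅⁅H₃, H₁⁆, H₂⁆ ≤ N) : ⁅⁅H₁, H₂⁆, H₃⁆ ≤ N := by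
  have le_iff_map_eq_bot : ∀ A B C : Subgroup G, ⁅⁅A, B⁆, C⁆ ≤ N ↔
      ⁅⁅A.map (QuotientGroup.mk' N), B.map (QuotientGroup.mk' N)⁆,
        C.map (QuotientGroup.mk' N)⁆ = ⊥ := by
    intro A B C
    rw [← map_commutator, ← map_commutator, map_eq_bot_iff, QuotientGroup.ker_mk']
  rw [le_iff_map_eq_bot] at h1 h2 ⊢
  exact commutator_commutator_eq_bot_of_rotate h1 h2

theorem commutator_lowerCentralSeries_le (i j : ℕ) :
    ⁅(⊤ : Subgroup G).lowerCentralSeries i, (⊤ : Subgroup G).lowerCentralSeries j⁆ ≤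
      (⊤ : Subgroup G).lowerCentralSeries (i + j + 1) := by
  induction j generalizing i with
  | zero => exact le_rfl
  | succ j ih =>
    rw [lowerCentralSeries_succ, commutator_comm]
    apply commutator_commutator_le_of_rotate
    · rw [commutator_comm ⊤, ← lowerCentralSeries_succ, ← add_assoc, add_right_comm i j 1]
      exact ih (i + 1)
    · exact commutator_mono (ih i) le_rfl

theorem map_lowerCentralSeries_le_of_range_le {H : Type*} [Group H] (f : G →* H) {c : ℕ}
    (hf : f.range ≤ (⊤ : Subgroup H).lowerCentralSeries c) (n : ℕ) :
    ((⊤ : Subgroup G).lowerCentralSeries n).map f ≤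
      (⊤ : Subgroup H).lowerCentralSeries ((c + 1) * n + c) := by
  rw [MonoidHom.range_eq_map] at hf
  induction n with
  | zero => simpa using hf
  | succ n ih =>
    rw [lowerCentralSeries_succ, map_commutator]
    calc ⁅((⊤ : Subgroup G).lowerCentralSeries n).map f, (⊤ : Subgroup G).map f⁆
        ≤ (⊤ : Subgroup H).lowerCentralSeries ((c + 1) * n + c + c + 1) :=
          (commutator_mono ih hf).trans (commutator_lowerCentralSeries_le _ _)
      _ = (⊤ : Subgroup H).lowerCentralSeries ((c + 1) * (n + 1) + c) := by ring_nf

end Subgroup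

theorem FreeGroup.range_le_of_forall_of_mem {α H : Type*} [Group H] (f : FreeGroup α →* H)
    {K : Subgroup H} (h : ∀ a, f (FreeGroup.of a) ∈ K) : f.range ≤ K := by
  rw [MonoidHom.range_eq_map, ← FreeGroup.closure_range_of, MonoidHom.map_closure,
    Subgroup.closure_le]
  rintro _ ⟨_, ⟨a, rfl⟩, rfl⟩
  exact h a

/-- Let `F₃` be the free group on `x₁, x₂, x₃` and `F₆` the free group on
`y₁, z₁, y₂, z₂, y₃, z₃` (here `Fin 6`, with `yᵢ = of (2i)` and `zᵢ = of (2i+1)` for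
`i = 0, 1, 2`). If `η : F₃ → F₆` is the homomorphism with `η(xᵢ) = ⁅yᵢ, zᵢ⁆`, then for every
`k ≥ 1`, `η` maps the `k`-th term of the lower central series of `F₃` into the `2k`-th term
of the lower central series of `F₆` (in Mathlib's indexing, `lowerCentralSeries G m` is the
`(m+1)`-st term `G_(m+1)`). -/
theorem stmt13 (η : FreeGroup (Fin 3) →* FreeGroup (Fin 6))
    (hη : ∀ i : Fin 3, η (FreeGroup.of i) =
      ⁅FreeGroup.of (⟨2 * i.1, by have := i.isLt; omega⟩ : Fin 6),
       FreeGroup.of (⟨2 * i.1 + 1, by have := i.isLt; omega⟩ : Fin 6)⁆)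
    (k : ℕ) :
    Subgroup.map η ((⊤ : Subgroup (FreeGroup (Fin 3))).lowerCentralSeries (k - 1)) ≤
      (⊤ : Subgroup (FreeGroup (Fin 6))).lowerCentralSeries (2 * k - 1) := by
  have range_le : η.range ≤ (⊤ : Subgroup (FreeGroup (Fin 6))).lowerCentralSeries 1 :=
    FreeGroup.range_le_of_forall_of_mem η fun i => hη i ▸
      Subgroup.commutator_mem_commutator (Subgroup.mem_top _) (Subgroup.mem_top _)
  calc Subgroup.map η ((⊤ : Subgroup (FreeGroup (Fin 3))).lowerCentralSeries (k - 1))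
      ≤ (⊤ : Subgroup (FreeGroup (Fin 6))).lowerCentralSeries ((1 + 1) * (k - 1) + 1) :=
        Subgroup.map_lowerCentralSeries_le_of_range_le η range_le (k - 1)
    _ ≤ (⊤ : Subgroup (FreeGroup (Fin 6))).lowerCentralSeries (2 * k - 1) :=
        Subgroup.lowerCentralSeries_antitone _ (by omega)
end
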